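/- arXiv:1311.2254 — 4 statements merged into one kernel-verified Lean document; each statement's English description precedes it below -/
import Mathlib

section
/- Let η ≥ 2 be an integer and S(z) = (1 - z^η)/(1 - z). Then for every δ > 0, the second derivative with respect to δ of log S(e^{-δ}) is strictly positive; equivalently, e^δ/(e^δ - 1)^2 - η² e^{ηδ}/(e^{ηδ} - 1)^2 > 0 for all δ > 0. -/
lemma aux_sinh_lt (t : ℝ) (ht : 0 < t) : ∀ n : ℕ, 2 ≤ n →
    (n : ℝ) * Real.sinh t < Real.sinh (n * t) := by
  have hs : 0 < Real.sinh t := Real.sinh_pos_iff.2 ht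
  have hc : 1 < Real.cosh t := by
    have := Real.one_lt_cosh.2 (ne_of_gt ht)
    exact this
  intro n hn
  induction n with
  | zero => omega
  | succ m ih =>
    rcases Nat.lt_or_ge m 2 with hm | hm
    · interval_cases m
      · omega
      · push_cast
        have h2 : Real.sinh (2 * t) = 2 * Real.sinh t * Real.cosh t :=
          Real.sinh_two_mul t
        rw [h2]
        nlinarith
    · have h := ih hm
      have hadd : Real.sinh ((m + 1 : ℕ) * t) =
          Real.sinh ((m : ℝ) * t) * Real.cosh t + Real.cosh ((m : ℝ) * t) * Real.sinh t := by
        push_cast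
        rw [add_mul, one_mul, Real.sinh_add]
      rw [hadd]
      have hcm : 1 < Real.cosh ((m : ℝ) * t) := by
        refine Real.one_lt_cosh.2 (ne_of_gt ?_)
        positivity
      have hsm : 0 < Real.sinh ((m : ℝ) * t) := by
        refine Real.sinh_pos_iff.2 (by positivity)
      push_cast
      nlinarith

lemma aux_exp_div (x : ℝ) (hx : 0 < x) :
    Real.exp x / (Real.exp x - 1) ^ 2 = 1 / (4 * Real.sinh (x / 2) ^ 2) := by
  have h1 : Real.exp (x / 2) * Real.exp (x / 2) = Real.exp x := by
    rw [← Real.exp_add]; ring_nf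
  have h2 : Real.exp (x / 2) * Real.exp (-(x / 2)) = 1 := by
    rw [← Real.exp_add]; simp
  have hs : Real.sinh (x / 2) = (Real.exp (x / 2) - Real.exp (-(x / 2))) / 2 :=
    Real.sinh_eq _
  have hexp : 1 < Real.exp x := by
    calc (1 : ℝ) = Real.exp 0 := by simp
    _ < Real.exp x := Real.exp_lt_exp.2 hx
  have hspos : 0 < Real.sinh (x / 2) := Real.sinh_pos_iff.2 (by positivity)
  have hne : (0:ℝ) < Real.exp x - 1 := by linarith
  rw [div_eq_div_iff (pow_pos hne 2).ne' (by positivity : (0:ℝ) < 4 * Real.sinh (x / 2) ^ 2).ne', hs]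
  linear_combination (Real.exp x - Real.exp (-(x / 2)) ^ 2) * h1
    + (Real.exp (x / 2) * Real.exp (-(x / 2)) + 1 - 2 * Real.exp x) * h2

theorem stmt_2 (η : ℕ) (hη : 2 ≤ η) (δ : ℝ) (hδ : 0 < δ) :
    Real.exp δ / (Real.exp δ - 1) ^ 2
      - (η : ℝ) ^ 2 * Real.exp (η * δ) / (Real.exp (η * δ) - 1) ^ 2 > 0 := by
  have hηδ : 0 < (η : ℝ) * δ := by
    have : (2 : ℝ) ≤ (η : ℝ) := by exact_mod_cast hη
    nlinarith
  have key : (η : ℝ) * Real.sinh (δ / 2) < Real.sinh ((η : ℝ) * (δ / 2)) :=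
    aux_sinh_lt (δ / 2) (by linarith) η hη
  have s1pos : 0 < Real.sinh (δ / 2) := Real.sinh_pos_iff.2 (by linarith)
  have s2pos : 0 < Real.sinh ((η : ℝ) * (δ / 2)) := by
    have hη2 : (2 : ℝ) ≤ (η : ℝ) := by exact_mod_cast hη
    nlinarith
  have id1 := aux_exp_div δ hδ
  have id2 := aux_exp_div ((η : ℝ) * δ) hηδ
  have hhalf : (η : ℝ) * δ / 2 = (η : ℝ) * (δ / 2) := by ring
  rw [hhalf] at id2
  rw [id1, mul_div_assoc, id2]
  have hsq : (η : ℝ) ^ 2 * Real.sinh (δ / 2) ^ 2 < Real.sinh ((η : ℝ) * (δ / 2)) ^ 2 := by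
    have hη2 : (2 : ℝ) ≤ (η : ℝ) := by exact_mod_cast hη
    have hpos : 0 < (η : ℝ) * Real.sinh (δ / 2) := by nlinarith
    nlinarith [pow_lt_pow_left₀ key hpos.le (by norm_num : (2:ℕ) ≠ 0)]
  have h4 : (η : ℝ) ^ 2 * (1 / (4 * Real.sinh ((η : ℝ) * (δ / 2)) ^ 2))
      < 1 / (4 * Real.sinh (δ / 2) ^ 2) := by
    rw [mul_one_div, div_lt_div_iff₀ (by positivity) (by positivity)]
    nlinarith
  linarith
end

section
/- Let q > 1 and define c_n by ∏_{k=1}^∞ (1 + k^{-q} z^k) = Σ_{n=0}^∞ c_n z^n for |z| < 1. Then c_n ~ W(q) n^{-q} as n → ∞, where W(q) = ∏_{k=1}^∞ (1 + k^{-q}). -/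
/-!
With `a k = k ^ (-q)`, the coefficient `c n` is the sum over the partitions of `n` into distinct
parts of the product of `a` over the parts. Splitting off the largest part `n - j` gives
`c n = ∑ j < n, a (n - j) * w n j`, where `w n j ≤ c j` counts the partitions of `j` into parts
smaller than `n - j`, and `w n j = c j` once `2 j < n`. For `2 j ≤ n` the ratio `a (n - j) / a n`
tends to `1` and is at most `2 ^ q`, so by dominated convergence these terms contribute
`(∑ j, c j) * a n = W(q) * a n` asymptotically. For `2 j > n` the largest part is still at
least `√n`; an a priori bound `c j ≤ K * a j`, proved by strong induction from the same
splitting, bounds these terms by `a n` times the tail `∑ k ≥ √n, a k = o(1)`.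
-/

open Polynomial Filter Finset Topology

namespace DistinctParts

variable (a : ℕ → ℝ)

noncomputable def prodPoly (m : ℕ) : ℝ[X] :=
  ∏ k ∈ range m, (1 + C (a (k + 1)) * X ^ (k + 1))

/-- The sum, over the partitions of `n` into distinct parts at most `m`, of the product of `a`
over the parts. -/
noncomputable def weight (m n : ℕ) : ℝ := (prodPoly a m).coeff n

/-- The `n`-th coefficient of `∏ k ≥ 1, (1 + a k z ^ k)`: no part of a partition of `n`
exceeds `n`. -/
noncomputable def coeffs (n : ℕ) : ℝ := weight a n n

variable {a}

lemma weight_zero_left (n : ℕ) : weight a 0 n = if n = 0 then 1 else 0 := by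
  simp [weight, prodPoly, coeff_one]

lemma weight_succ_left (m n : ℕ) :
    weight a (m + 1) n =
      weight a m n + a (m + 1) * if m + 1 ≤ n then weight a m (n - (m + 1)) else 0 := by
  have h : prodPoly a (m + 1) = prodPoly a m + C (a (m + 1)) * (prodPoly a m * X ^ (m + 1)) := by
    rw [prodPoly, prod_range_succ, ← prodPoly]
    ring
  rw [weight, h, coeff_add, coeff_C_mul, coeff_mul_X_pow']
  rfl

lemma weight_eq_zero_of_lt {m n : ℕ} (h : m * m < n) : weight a m n = 0 := by
  rw [weight, prodPoly]
  refine coeff_eq_zero_of_natDegree_lt (lt_of_le_of_lt ?_ h)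
  calc (∏ k ∈ range m, (1 + C (a (k + 1)) * X ^ (k + 1))).natDegree
      ≤ ∑ k ∈ range m, (1 + C (a (k + 1)) * X ^ (k + 1)).natDegree :=
        natDegree_prod_le _ _
    _ ≤ ∑ _k ∈ range m, m := by
        refine sum_le_sum fun k hk => ?_
        have hk : k + 1 ≤ m := mem_range.mp hk
        refine (natDegree_add_le _ _).trans (max_le (by simp) ?_)
        exact (natDegree_C_mul_X_pow_le (a (k + 1)) (k + 1)).trans hk
    _ = m * m := by simp

lemma sqrt_le_of_weight_ne_zero {n j : ℕ} (hj : j < n) (hw : weight a (n - j - 1) j ≠ 0) :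
    Nat.sqrt n ≤ n - j := by
  obtain ⟨m, hm⟩ : ∃ m, n - j = m + 1 := ⟨n - j - 1, by omega⟩
  have hjm : j ≤ m * m := by
    simpa [hm] using not_lt.mp (mt weight_eq_zero_of_lt hw)
  calc Nat.sqrt n ≤ Nat.sqrt ((m + 1) * (m + 1)) :=
        Nat.sqrt_le_sqrt (by nlinarith [show n = j + (m + 1) by omega])
    _ = n - j := by rw [Nat.sqrt_eq, hm]

lemma weight_eq_coeffs {m n : ℕ} (h : n ≤ m) : weight a m n = coeffs a n := by
  induction m, h using Nat.le_induction with
  | base => rfl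
  | succ m hnm ih => rw [weight_succ_left, if_neg (by omega), mul_zero, add_zero, ih]

lemma coeffs_zero : coeffs a 0 = 1 := by simp [coeffs, weight_zero_left]

/-- Splitting off the largest part `n - j` of a partition of `n`. -/
lemma coeffs_eq_sum {n : ℕ} (hn : 0 < n) :
    coeffs a n = ∑ j ∈ range n, a (n - j) * weight a (n - j - 1) j := by
  have telescope : coeffs a n = ∑ k ∈ range n, (weight a (k + 1) n - weight a k n) := by
    rw [sum_range_sub (fun k => weight a k n), weight_zero_left, if_neg hn.ne', sub_zero]
    rfl
  rw [telescope, ← sum_range_reflect]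
  refine sum_congr rfl fun j hj => ?_
  have hj := mem_range.mp hj
  rw [weight_succ_left, if_pos (by omega), show n - 1 - j + 1 = n - j by omega,
    show n - (n - j) = j by omega, show n - 1 - j = n - j - 1 by omega]
  ring

section Nonneg

variable (ha : ∀ k, 0 ≤ a (k + 1))
include ha

lemma weight_nonneg (m n : ℕ) : 0 ≤ weight a m n := by
  induction m generalizing n with
  | zero => rw [weight_zero_left]; split <;> norm_num
  | succ m ih =>
    rw [weight_succ_left]
    refine add_nonneg (ih n) (mul_nonneg (ha m) ?_)
    split
    exacts [ih _, le_rfl]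

lemma coeffs_nonneg (n : ℕ) : 0 ≤ coeffs a n := weight_nonneg ha n n

lemma weight_mono_left (n : ℕ) : Monotone fun m => weight a m n := by
  refine monotone_nat_of_le_succ fun m => ?_
  rw [weight_succ_left]
  refine le_add_of_nonneg_right (mul_nonneg (ha m) ?_)
  split
  exacts [weight_nonneg ha _ _, le_rfl]

lemma weight_le_coeffs (m n : ℕ) : weight a m n ≤ coeffs a n := by
  rcases le_total n m with h | h
  · exact (weight_eq_coeffs h).le
  · exact (weight_mono_left ha n h).trans_eq (weight_eq_coeffs le_rfl)

end Nonneg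

section Eval

variable {A : Type*} [NormedCommRing A] [NormedAlgebra ℝ A]

lemma aeval_prodPoly (z : A) (m : ℕ) :
    aeval z (prodPoly a m) = ∏ k ∈ range m, (1 + a (k + 1) • z ^ (k + 1)) := by
  simp [prodPoly, Algebra.smul_def]

lemma hasSum_weight_smul_pow (z : A) (m : ℕ) :
    HasSum (fun n => weight a m n • z ^ n) (aeval z (prodPoly a m)) := by
  rw [aeval_eq_sum_range]
  refine hasSum_sum_of_ne_finset_zero fun n hn => ?_
  rw [weight, coeff_eq_zero_of_natDegree_lt (by simpa using hn), zero_smul]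

variable [NormOneClass A]

lemma norm_smul_pow_le_of_norm_le_one {z : A} (hz : ‖z‖ ≤ 1) (c : ℝ) (n : ℕ) :
    ‖c • z ^ n‖ ≤ ‖c‖ := by
  rw [norm_smul]
  exact mul_le_of_le_one_right (norm_nonneg c)
    ((norm_pow_le z n).trans (pow_le_one₀ (norm_nonneg z) hz))

variable (ha : ∀ k, 0 ≤ a (k + 1)) (hs : Summable fun k => a (k + 1))
include ha hs

lemma summable_coeffs : Summable (coeffs a) := by
  refine summable_of_sum_range_le (c := Real.exp (∑' k, a (k + 1))) (coeffs_nonneg ha)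
    fun N => ?_
  have hprod := hasSum_weight_smul_pow (a := a) (1 : ℝ) N
  simp only [aeval_prodPoly, one_pow, smul_eq_mul, mul_one] at hprod
  calc ∑ n ∈ range N, coeffs a n = ∑ n ∈ range N, weight a N n :=
        sum_congr rfl fun n hn => (weight_eq_coeffs (mem_range.mp hn).le).symm
    _ ≤ ∏ k ∈ range N, (1 + a (k + 1)) :=
        sum_le_hasSum _ (fun n _ => weight_nonneg ha N n) hprod
    _ ≤ Real.exp (∑ k ∈ range N, a (k + 1)) := Real.prod_one_add_le_exp_sum _ ha
    _ ≤ Real.exp (∑' k, a (k + 1)) := Real.exp_le_exp.mpr (hs.sum_le_tsum _ fun k _ => ha k)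

lemma one_le_tsum_coeffs : 1 ≤ ∑' n, coeffs a n :=
  coeffs_zero (a := a) ▸ (summable_coeffs ha hs).le_tsum 0 fun j _ => coeffs_nonneg ha j

variable [CompleteSpace A] {z : A} (hz : ‖z‖ ≤ 1)
include hz

lemma summable_coeffs_smul_pow : Summable fun n => coeffs a n • z ^ n :=
  (summable_coeffs ha hs).of_norm_bounded fun n =>
    (norm_smul_pow_le_of_norm_le_one hz _ n).trans_eq (Real.norm_of_nonneg (coeffs_nonneg ha n))

lemma hasProd_one_add_smul_pow :
    HasProd (fun k => 1 + a (k + 1) • z ^ (k + 1)) (∑' n, coeffs a n • z ^ n) := by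
  have hmul : Multipliable fun k => 1 + a (k + 1) • z ^ (k + 1) :=
    multipliable_one_add_of_summable <| hs.of_nonneg_of_le (fun k => norm_nonneg _) fun k =>
      (norm_smul_pow_le_of_norm_le_one hz _ _).trans_eq (Real.norm_of_nonneg (ha k))
  have hlim :
      Tendsto (fun m => aeval z (prodPoly a m)) atTop (𝓝 (∑' n, coeffs a n • z ^ n)) := by
    refine (tendsto_tsum_of_dominated_convergence (f := fun m n => weight a m n • z ^ n)
      (summable_coeffs ha hs)
      (fun n => tendsto_atTop_of_eventually_const (i₀ := n) fun m hm => ?_)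
      (Eventually.of_forall fun m n => ?_)).congr
      fun m => (hasSum_weight_smul_pow z m).tsum_eq
    · rw [weight_eq_coeffs hm]
    · refine (norm_smul_pow_le_of_norm_le_one hz _ n).trans ?_
      rw [Real.norm_of_nonneg (weight_nonneg ha m n)]
      exact weight_le_coeffs ha m n
  have hpartial := hmul.hasProd.tendsto_prod_nat
  simp_rw [← aeval_prodPoly] at hpartial
  simpa [tendsto_nhds_unique hpartial hlim] using hmul.hasProd

lemma hasSum_coeffs_smul_pow :
    HasSum (fun n => coeffs a n • z ^ n) (∏' k, (1 + a (k + 1) • z ^ (k + 1))) := by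
  rw [(hasProd_one_add_smul_pow ha hs hz).tprod_eq]
  exact (summable_coeffs_smul_pow ha hs hz).hasSum

end Eval

lemma tendsto_nat_sqrt_atTop : Tendsto Nat.sqrt atTop atTop :=
  tendsto_atTop_atTop.mpr fun M => ⟨M * M, fun _ hn => Nat.le_sqrt.mpr hn⟩

variable (a) in
/-- The terms of `coeffs_eq_sum` with largest part `n - j ≥ n / 2`; `minorSum` collects the
others. -/
noncomputable def majorSum (n : ℕ) : ℝ :=
  ∑ j ∈ range n with 2 * j ≤ n, a (n - j) * weight a (n - j - 1) j

variable (a) in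
noncomputable def minorSum (n : ℕ) : ℝ :=
  ∑ j ∈ range n with ¬2 * j ≤ n, a (n - j) * weight a (n - j - 1) j

lemma coeffs_eq_majorSum_add_minorSum {n : ℕ} (hn : 0 < n) :
    coeffs a n = majorSum a n + minorSum a n := by
  rw [coeffs_eq_sum hn, majorSum, minorSum, sum_filter_add_sum_filter_not]

lemma minorSum_nonneg (ha : ∀ k, 0 < k → 0 < a k) (n : ℕ) : 0 ≤ minorSum a n := by
  refine sum_nonneg fun j hj => mul_nonneg ?_ (weight_nonneg (fun k => (ha _ k.succ_pos).le) _ _)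
  exact (ha _ (by simp at hj; omega)).le

section Asymptotics

variable {C : ℝ} (ha : ∀ k, 0 < k → 0 < a k) (hs : Summable a)
  (hC : ∀ j n, 0 < j → j ≤ n → n ≤ 2 * j → a j ≤ C * a n)

include ha hs in
lemma sum_range_filter_le_tsum_add {M : ℕ} (hM : 0 < M) (n : ℕ) :
    ∑ j ∈ range n with M ≤ n - j, a (n - j) ≤ ∑' i, a (i + M) := by
  calc ∑ j ∈ range n with M ≤ n - j, a (n - j)
      = ∑ j ∈ range n with M ≤ n - j, a (n - j - M + M) :=
        sum_congr rfl fun j hj => by rw [Nat.sub_add_cancel (mem_filter.mp hj).2]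
    _ = ∑ i ∈ {j ∈ range n | M ≤ n - j}.image (fun j : ℕ => n - j - M), a (i + M) := by
        rw [sum_image]
        intro j hj k hk hjk
        simp only [coe_filter, mem_range, Set.mem_ofPred_eq] at hj hk hjk
        omega
    _ ≤ ∑' i, a (i + M) :=
        ((summable_nat_add_iff M).mpr hs).sum_le_tsum _ fun i _ => (ha _ (by omega)).le

include ha hC

lemma one_le_of_doubling : 1 ≤ C :=
  (le_mul_iff_one_le_left (ha 1 one_pos)).mp (hC 1 1 one_pos le_rfl (by norm_num))

include hs

lemma majorSum_le {n : ℕ} (hn : 0 < n) : majorSum a n ≤ C * a n * ∑' j, coeffs a j := by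
  have ha' : ∀ k, 0 ≤ a (k + 1) := fun k => (ha _ k.succ_pos).le
  have hCa : 0 ≤ C * a n := mul_nonneg (by linarith [one_le_of_doubling ha hC]) (ha n hn).le
  calc majorSum a n ≤ ∑ j ∈ range n with 2 * j ≤ n, C * a n * coeffs a j := by
        refine sum_le_sum fun j hj => ?_
        have hj := (mem_filter.mp hj).2
        exact mul_le_mul (hC _ _ (by omega) (by omega) (by omega)) (weight_le_coeffs ha' _ _)
          (weight_nonneg ha' _ _) hCa
    _ = C * a n * ∑ j ∈ range n with 2 * j ≤ n, coeffs a j := (mul_sum _ _ _).symm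
    _ ≤ C * a n * ∑' j, coeffs a j := by
        refine mul_le_mul_of_nonneg_left ?_ hCa
        exact (summable_coeffs ha' ((summable_nat_add_iff 1).mpr hs)).sum_le_tsum _
          fun j _ => coeffs_nonneg ha' j

lemma minorSum_le {K : ℝ} (hK0 : 0 ≤ K) {n : ℕ} (hn : 0 < n)
    (hK : ∀ j, 0 < j → j < n → coeffs a j ≤ K * a j) :
    minorSum a n ≤ C * K * a n * ∑' i, a (i + Nat.sqrt n) := by
  have ha' : ∀ k, 0 ≤ a (k + 1) := fun k => (ha _ k.succ_pos).le
  set M := Nat.sqrt n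
  set B := C * K * a n
  have hB : 0 ≤ B :=
    mul_nonneg (mul_nonneg (by linarith [one_le_of_doubling ha hC]) hK0) (ha n hn).le
  have hterm : ∀ j ∈ {j ∈ range n | ¬2 * j ≤ n}, a (n - j) * weight a (n - j - 1) j ≤
      (if M ≤ n - j then a (n - j) else 0) * B := by
    intro j hj
    obtain ⟨hjn, hj2⟩ := mem_filter.mp hj
    rw [mem_range] at hjn
    by_cases hw : weight a (n - j - 1) j = 0
    · rw [hw, mul_zero]
      refine mul_nonneg ?_ hB
      split_ifs
      exacts [(ha _ (by omega)).le, le_rfl]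
    · rw [if_pos (sqrt_le_of_weight_ne_zero hjn hw)]
      refine mul_le_mul_of_nonneg_left ?_ (ha _ (by omega)).le
      calc weight a (n - j - 1) j ≤ coeffs a j := weight_le_coeffs ha' _ _
        _ ≤ K * a j := hK j (by omega) hjn
        _ ≤ K * (C * a n) := mul_le_mul_of_nonneg_left (hC j n (by omega) hjn.le (by omega)) hK0
        _ = B := by ring
  calc minorSum a n
      ≤ ∑ j ∈ range n with ¬2 * j ≤ n, (if M ≤ n - j then a (n - j) else 0) * B :=
        sum_le_sum hterm
    _ = (∑ j ∈ range n with ¬2 * j ≤ n, if M ≤ n - j then a (n - j) else 0) * B :=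
        (sum_mul _ _ _).symm
    _ ≤ (∑ j ∈ range n, if M ≤ n - j then a (n - j) else 0) * B := by
        refine mul_le_mul_of_nonneg_right
          (sum_le_sum_of_subset_of_nonneg (filter_subset _ _) fun j hj _ => ?_) hB
        split_ifs
        exacts [(ha _ (by simp at hj; omega)).le, le_rfl]
    _ ≤ (∑' i, a (i + M)) * B := by
        rw [← sum_filter]
        exact mul_le_mul_of_nonneg_right
          (sum_range_filter_le_tsum_add ha hs (Nat.sqrt_pos.mpr hn) n) hB
    _ = B * ∑' i, a (i + M) := by ring

lemma exists_coeffs_le_mul : ∃ K, 0 ≤ K ∧ ∀ n, 0 < n → coeffs a n ≤ K * a n := by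
  have ha' : ∀ k, 0 ≤ a (k + 1) := fun k => (ha _ k.succ_pos).le
  set W := ∑' j, coeffs a j
  have hW : 0 ≤ W := tsum_nonneg (coeffs_nonneg ha')
  have hC1 := one_le_of_doubling ha hC
  have hT : Tendsto (fun n => C * ∑' i, a (i + Nat.sqrt n)) atTop (𝓝 0) := by
    simpa using ((tendsto_sum_nat_add a).comp tendsto_nat_sqrt_atTop).const_mul C
  obtain ⟨n₀, hn₀⟩ :=
    eventually_atTop.mp (hT.eventually_le_const (by norm_num : (0 : ℝ) < 1 / 2))
  set K := 2 * C * W + ∑ m ∈ Ico 1 n₀, coeffs a m / a m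
  have hK0 : 0 ≤ K := add_nonneg (by positivity) <| sum_nonneg fun m hm =>
    div_nonneg (coeffs_nonneg ha' m) (ha m (by simp at hm; omega)).le
  refine ⟨K, hK0, fun n => ?_⟩
  induction n using Nat.strong_induction_on with
  | _ n ih =>
  intro hn
  have han := ha n hn
  rcases lt_or_ge n n₀ with hlt | hge
  · have hratio : coeffs a n / a n ≤ K :=
      le_add_of_nonneg_of_le (by positivity) <|
        single_le_sum (f := fun m => coeffs a m / a m)
          (fun m hm => div_nonneg (coeffs_nonneg ha' m) (ha m (by simp at hm; omega)).le)
          (by simp; omega)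
    exact (div_le_iff₀ han).mp hratio
  · have hCW : C * W ≤ K / 2 := by
      have := sum_nonneg fun m (hm : m ∈ Ico 1 n₀) =>
        div_nonneg (coeffs_nonneg ha' m) (ha m (by simp at hm; omega)).le
      linarith
    calc coeffs a n = majorSum a n + minorSum a n := coeffs_eq_majorSum_add_minorSum hn
      _ ≤ C * a n * W + C * K * a n * ∑' i, a (i + Nat.sqrt n) :=
          add_le_add (majorSum_le ha hs hC hn)
            (minorSum_le ha hs hC hK0 hn fun j hj hjn => ih j hjn hj)
      _ = C * W * a n + (C * ∑' i, a (i + Nat.sqrt n)) * (K * a n) := by ring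
      _ ≤ K / 2 * a n + 1 / 2 * (K * a n) :=
          add_le_add (mul_le_mul_of_nonneg_right hCW han.le)
            (mul_le_mul_of_nonneg_right (hn₀ n hge) (by positivity))
      _ = K * a n := by ring

lemma tendsto_minorSum_div : Tendsto (fun n => minorSum a n / a n) atTop (𝓝 0) := by
  obtain ⟨K, hK0, hK⟩ := exists_coeffs_le_mul ha hs hC
  have hT : Tendsto (fun n => C * K * ∑' i, a (i + Nat.sqrt n)) atTop (𝓝 0) := by
    simpa using ((tendsto_sum_nat_add a).comp tendsto_nat_sqrt_atTop).const_mul (C * K)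
  refine squeeze_zero' ?_ ?_ hT
  · filter_upwards [eventually_gt_atTop 0] with n hn
    exact div_nonneg (minorSum_nonneg ha n) (ha n hn).le
  · filter_upwards [eventually_gt_atTop 0] with n hn
    rw [div_le_iff₀ (ha n hn)]
    calc minorSum a n ≤ C * K * a n * ∑' i, a (i + Nat.sqrt n) :=
          minorSum_le ha hs hC hK0 hn fun j hj _ => hK j hj
      _ = C * K * (∑' i, a (i + Nat.sqrt n)) * a n := by ring

lemma tendsto_majorSum_div (hr : ∀ j, Tendsto (fun n => a (n - j) / a n) atTop (𝓝 1)) :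
    Tendsto (fun n => majorSum a n / a n) atTop (𝓝 (∑' j, coeffs a j)) := by
  have ha' : ∀ k, 0 ≤ a (k + 1) := fun k => (ha _ k.succ_pos).le
  set G : ℕ → ℕ → ℝ := fun n j =>
    if 2 * j ≤ n then a (n - j) / a n * weight a (n - j - 1) j else 0
  have hG : ∀ n, 0 < n → ∑' j, G n j = majorSum a n / a n := by
    intro n hn
    rw [tsum_eq_sum (s := range n) fun j hj => if_neg (by simp at hj; omega), majorSum, sum_div,
      sum_filter]
    refine sum_congr rfl fun j _ => ?_
    split_ifs
    exacts [by ring, by simp]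
  have hlim : Tendsto (fun n => ∑' j, G n j) atTop (𝓝 (∑' j, coeffs a j)) := by
    refine tendsto_tsum_of_dominated_convergence (bound := fun j => C * coeffs a j)
      ((summable_coeffs ha' ((summable_nat_add_iff 1).mpr hs)).mul_left C) (fun j => ?_) ?_
    · have hj := (hr j).mul_const (coeffs a j)
      rw [one_mul] at hj
      refine hj.congr' ?_
      filter_upwards [eventually_ge_atTop (2 * j + 1)] with n hn
      simp only [G, if_pos (by omega : 2 * j ≤ n), weight_eq_coeffs (by omega : j ≤ n - j - 1)]
    · filter_upwards [eventually_gt_atTop 0] with n hn j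
      have hC0 : 0 ≤ C := by linarith [one_le_of_doubling ha hC]
      simp only [G]
      split_ifs with h
      · have hquot : a (n - j) / a n ≤ C :=
          (div_le_iff₀ (ha n hn)).mpr (hC _ _ (by omega) (by omega) (by omega))
        have hquot0 : 0 ≤ a (n - j) / a n := div_nonneg (ha _ (by omega)).le (ha n hn).le
        rw [Real.norm_of_nonneg (mul_nonneg hquot0 (weight_nonneg ha' _ _))]
        exact mul_le_mul hquot (weight_le_coeffs ha' _ _) (weight_nonneg ha' _ _) hC0
      · simpa using mul_nonneg hC0 (coeffs_nonneg ha' j)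
  exact hlim.congr' ((eventually_gt_atTop 0).mono hG)

theorem tendsto_coeffs_div (hr : ∀ j, Tendsto (fun n => a (n - j) / a n) atTop (𝓝 1)) :
    Tendsto (fun n => coeffs a n / a n) atTop (𝓝 (∑' n, coeffs a n)) := by
  have h := (tendsto_majorSum_div ha hs hC hr).add (tendsto_minorSum_div ha hs hC)
  rw [add_zero] at h
  refine h.congr' ?_
  filter_upwards [eventually_gt_atTop 0] with n hn
  rw [coeffs_eq_majorSum_add_minorSum hn, add_div]

end Asymptotics

end DistinctParts

lemma hasFPowerSeriesOnBall_ofScalars_of_hasSum {c : ℕ → ℂ} {f : ℂ → ℂ}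
    (hf : ∀ z : ℂ, ‖z‖ < 1 → HasSum (fun n => c n * z ^ n) (f z)) :
    HasFPowerSeriesOnBall f (.ofScalars ℂ c) 0 1 where
  r_le := by
    refine le_of_forall_lt_imp_le_of_dense fun r hr => ?_
    lift r to NNReal using hr.ne_top
    refine FormalMultilinearSeries.le_radius_of_summable _ ?_
    simpa [FormalMultilinearSeries.ofScalars_norm] using
      (hf r (by simpa using hr)).summable.norm
  r_pos := one_pos
  hasSum {y} hy := by
    rw [← ENNReal.coe_one, Metric.eball_coe, NNReal.coe_one, mem_ball_zero_iff] at hy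
    simpa [FormalMultilinearSeries.ofScalars_apply_eq, mul_comm] using hf y hy

lemma eq_of_hasSum_mul_pow {c d : ℕ → ℂ} {f : ℂ → ℂ}
    (hc : ∀ z : ℂ, ‖z‖ < 1 → HasSum (fun n => c n * z ^ n) (f z))
    (hd : ∀ z : ℂ, ‖z‖ < 1 → HasSum (fun n => d n * z ^ n) (f z)) : c = d :=
  FormalMultilinearSeries.ofScalars_series_injective ℂ ℂ <|
    (hasFPowerSeriesOnBall_ofScalars_of_hasSum hc).hasFPowerSeriesAt.eq_formalMultilinearSeries
      (hasFPowerSeriesOnBall_ofScalars_of_hasSum hd).hasFPowerSeriesAt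

lemma rpow_neg_le_two_rpow_mul {q : ℝ} (hq : 0 ≤ q) (j n : ℕ) (hj : 0 < j) (hjn : j ≤ n)
    (hn : n ≤ 2 * j) : (j : ℝ) ^ (-q) ≤ 2 ^ q * (n : ℝ) ^ (-q) := by
  have hj' : (0 : ℝ) < j := Nat.cast_pos.mpr hj
  calc (j : ℝ) ^ (-q) = 2 ^ q * (2 * (j : ℝ)) ^ (-q) := by
        rw [Real.mul_rpow zero_le_two hj'.le, Real.rpow_neg zero_le_two,
          mul_inv_cancel_left₀ (Real.rpow_pos_of_pos two_pos q).ne']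
    _ ≤ 2 ^ q * (n : ℝ) ^ (-q) := by
        refine mul_le_mul_of_nonneg_left ?_ (by positivity)
        have hn' : (0 : ℝ) < n := hj'.trans_le (by exact_mod_cast hjn)
        have h2j : (n : ℝ) ≤ 2 * j := by exact_mod_cast hn
        exact Real.rpow_le_rpow_of_nonpos hn' h2j (by linarith)

lemma tendsto_rpow_neg_sub_div (q : ℝ) (j : ℕ) :
    Tendsto (fun n : ℕ => ((n - j : ℕ) : ℝ) ^ (-q) / (n : ℝ) ^ (-q)) atTop (𝓝 1) := by
  rw [← tendsto_add_atTop_iff_nat j]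
  have h := (tendsto_natCast_div_add_atTop (j : ℝ)).rpow_const (p := -q) (Or.inl one_ne_zero)
  rw [Real.one_rpow] at h
  refine h.congr fun n => ?_
  rw [Nat.add_sub_cancel, Real.div_rpow (by positivity) (by positivity)]
  push_cast
  rfl

open DistinctParts

theorem stmt_7 (q : ℝ) (hq : 1 < q) (c : ℕ → ℝ)
    (hc : ∀ z : ℂ, ‖z‖ < 1 →
      HasSum (fun n : ℕ => (c n : ℂ) * z ^ n)
        (∏' k : ℕ, (1 + ((k : ℂ) + 1) ^ (-(q : ℂ)) * z ^ (k + 1)))) :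
    Asymptotics.IsEquivalent Filter.atTop
      (fun n : ℕ => c n)
      (fun n : ℕ => (∏' k : ℕ, (1 + ((k : ℝ) + 1) ^ (-q))) * (n : ℝ) ^ (-q)) := by
  set a : ℕ → ℝ := fun k => (k : ℝ) ^ (-q)
  have ha : ∀ k, 0 < k → 0 < a k := fun k hk => Real.rpow_pos_of_pos (Nat.cast_pos.mpr hk) _
  have ha' : ∀ k, 0 ≤ a (k + 1) := fun k => (ha _ k.succ_pos).le
  have hs : Summable a := Real.summable_nat_rpow.mpr (by linarith)
  have hs' : Summable fun k => a (k + 1) := (summable_nat_add_iff 1).mpr hs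
  have hcoeffs : (fun n => (c n : ℂ)) = fun n => (coeffs a n : ℂ) := by
    refine eq_of_hasSum_mul_pow hc fun z hz => ?_
    have hfactor (k : ℕ) :
        a (k + 1) • z ^ (k + 1) = ((k : ℂ) + 1) ^ (-(q : ℂ)) * z ^ (k + 1) := by
      rw [Complex.real_smul, Complex.ofReal_cpow (by positivity)]
      push_cast
      rfl
    simpa only [hfactor, Complex.real_smul] using hasSum_coeffs_smul_pow ha' hs' hz.le
  have hW : ∏' k : ℕ, (1 + ((k : ℝ) + 1) ^ (-q)) = ∑' n, coeffs a n := by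
    simpa [a] using (hasProd_one_add_smul_pow ha' hs' (z := (1 : ℝ)) (by simp)).tprod_eq
  have hW0 : 0 < ∑' n, coeffs a n := zero_lt_one.trans_le (one_le_tsum_coeffs ha' hs')
  have hlim := (tendsto_coeffs_div ha hs (rpow_neg_le_two_rpow_mul (by linarith))
    (tendsto_rpow_neg_sub_div q)).div_const (∑' n, coeffs a n)
  rw [div_self hW0.ne'] at hlim
  refine Asymptotics.isEquivalent_of_tendsto_one (hlim.congr' ?_)
  filter_upwards [eventually_gt_atTop 0] with n hn
  have hcn : c n = coeffs a n := by exact_mod_cast congrFun hcoeffs n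
  simp only [Pi.div_apply, hcn, hW, a]
  field_simp
end

section
/- Let δ > 0 and 0 < α ≤ 1/2 with δ/(2π) ≤ α. Set P = ⌊(1 + αδ^{−1})/(2α)⌋. Then Σ_{k=⌈(8δ)^{−1}⌉}^{P} sin²(πkα) ≥ δ^{−1}/8, provided δ is small enough that P ≥ (2δ)^{−1}. -/
open Real Finset

lemma tele_cos (θ : ℝ) (a b : ℕ) (h : a ≤ b) :
    ∑ k ∈ Finset.Icc a b, 2 * Real.sin (θ/2) * Real.cos (k*θ)
      = Real.sin (((b:ℝ)+1/2)*θ) - Real.sin (((a:ℝ)-1/2)*θ) := by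
  induction b, h using Nat.le_induction with
  | base =>
      rw [Finset.Icc_self, Finset.sum_singleton,
        show ((a:ℝ)+1/2)*θ = a*θ + θ/2 by ring,
        show ((a:ℝ)-1/2)*θ = a*θ - θ/2 by ring, Real.sin_add, Real.sin_sub]
      ring
  | succ n hn ih =>
      rw [Finset.sum_Icc_succ_top (by omega), ih]
      push_cast
      rw [show ((n:ℝ)+1+1/2)*θ = ((n:ℝ)+1)*θ + θ/2 by ring,
        show ((n:ℝ)+1/2)*θ = ((n:ℝ)+1)*θ - θ/2 by ring, Real.sin_add, Real.sin_sub]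
      ring

set_option maxHeartbeats 1000000 in
theorem stmt_16 (δ α : ℝ) (hδ : 0 < δ) (hα0 : 0 < α) (hα : α ≤ 1 / 2)
    (hlow : δ / (2 * Real.pi) ≤ α)
    (P : ℕ) (hP : P = ⌊(1 + α / δ) / (2 * α)⌋₊)
    (hPbig : ((2 * δ)⁻¹ : ℝ) ≤ P) :
    ∑ k ∈ Finset.Icc ⌈(8 * δ)⁻¹⌉₊ P, Real.sin (Real.pi * k * α) ^ 2 ≥ δ⁻¹ / 8 := by
  have hπ := Real.pi_pos
  set a : ℕ := ⌈(8 * δ)⁻¹⌉₊ with ha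
  set s : ℝ := Real.sin (Real.pi * α) with hsdef
  -- basic facts about s
  have hπα : Real.pi * α ≤ Real.pi / 2 := by nlinarith
  have hs0 : 0 < s := Real.sin_pos_of_pos_of_lt_pi (by positivity) (by nlinarith)
  have hs2 : 2 * α ≤ s := by
    have h := Real.mul_le_sin (x := Real.pi * α) (by positivity) hπα
    have h2 : 2 / Real.pi * (Real.pi * α) = 2 * α := by field_simp
    rw [h2] at h; exact h
  -- P lower bound
  have hPreal : ((2*α)⁻¹ + δ⁻¹/2 - 1 : ℝ) ≤ P := by
    have h1 := Nat.sub_one_lt_floor ((1 + α / δ) / (2 * α))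
    rw [← hP] at h1
    have h2 : (1 + α / δ) / (2 * α) = (2*α)⁻¹ + δ⁻¹/2 := by field_simp
    rw [h2] at h1; linarith
  -- a upper bound
  have hareal : (a : ℝ) ≤ δ⁻¹/8 + 1 := by
    have h1 : (a:ℝ) < (8*δ)⁻¹ + 1 := by rw [ha]; exact Nat.ceil_lt_add_one (by positivity)
    have h2 : (8*δ)⁻¹ = δ⁻¹/8 := by rw [mul_inv]; norm_num; ring
    linarith [h2 ▸ h1]
  have hd0 : (0:ℝ) < δ⁻¹ := by positivity
  -- P ≥ 1
  have hP1 : 1 ≤ P := by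
    by_contra h
    have hP0 : P = 0 := by omega
    rw [hP0] at hPbig
    simp only [Nat.cast_zero] at hPbig
    have : (0:ℝ) < (2*δ)⁻¹ := by positivity
    linarith
  by_cases hcase : (8*δ)⁻¹ ≤ 1
  · -- a = 1 case
    have ha1 : a = 1 := by
      have hle : a ≤ 1 := Nat.ceil_le.mpr (by exact_mod_cast hcase)
      have hge : 1 ≤ a := Nat.one_le_ceil_iff.mpr (by positivity)
      omega
    have haP : a ≤ P := by omega
    have hcard : ((Finset.Icc a P).card : ℝ) = (P:ℝ) + 1 - a := by
      rw [Nat.card_Icc, Nat.cast_sub (by omega)]; push_cast; ring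
    have htel := tele_cos (2*Real.pi*α) a P haP
    rw [show (2*Real.pi*α)/2 = Real.pi*α by ring, ← hsdef] at htel
    have htel2 : 2 * s * (∑ k ∈ Finset.Icc a P, Real.cos ((k:ℝ)*(2*Real.pi*α)))
        = Real.sin (((P:ℝ)+1/2)*(2*Real.pi*α)) - Real.sin (((a:ℝ)-1/2)*(2*Real.pi*α)) := by
      rw [Finset.mul_sum]; exact htel
    have hbot : Real.sin (((a:ℝ)-1/2)*(2*Real.pi*α)) = s := by
      rw [show ((a:ℝ)-1/2)*(2*Real.pi*α) = Real.pi*α by rw [ha1]; push_cast; ring]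
    have htop : Real.sin (((P:ℝ)+1/2)*(2*Real.pi*α)) ≤ 1 := Real.sin_le_one _
    have hSle : 2 * s * (∑ k ∈ Finset.Icc a P, Real.cos ((k:ℝ)*(2*Real.pi*α))) ≤ 1 - s := by
      rw [htel2, hbot]; linarith
    set S : ℝ := ∑ k ∈ Finset.Icc a P, Real.cos ((k:ℝ)*(2*Real.pi*α)) with hS
    have hsum : ∑ k ∈ Finset.Icc a P, Real.sin (Real.pi * k * α) ^ 2
        = ((P:ℝ) + 1 - a)/2 - S/2 := by
      have hpt : ∀ k ∈ Finset.Icc a P, Real.sin (Real.pi * (k:ℝ) * α) ^ 2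
          = 1/2 - Real.cos ((k:ℝ)*(2*Real.pi*α))/2 := by
        intro k _
        rw [Real.sin_sq_eq_half_sub,
          show 2*(Real.pi*(k:ℝ)*α) = (k:ℝ)*(2*Real.pi*α) by ring]
      rw [Finset.sum_congr rfl hpt, Finset.sum_sub_distrib, Finset.sum_const, hS,
        ← Finset.sum_div, nsmul_eq_mul, hcard]
      ring
    rw [ge_iff_le, hsum]
    -- S ≤ 1/(2s) - 1/2
    have hSb : S ≤ (2*s)⁻¹ - 1/2 := by
      have h2s : (0:ℝ) < 2*s := by linarith
      rw [← sub_nonneg, show (2*s)⁻¹ - 1/2 - S = (1 - s - 2*s*S) / (2*s) by field_simp]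
      apply div_nonneg (by linarith) (by linarith)
    have hsinv : (2*s)⁻¹ ≤ (4*α)⁻¹ := by
      apply inv_anti₀ (by positivity) (by linarith)
    have h4α : (4*α)⁻¹ = (2*α)⁻¹/2 := by rw [show (4:ℝ)*α = 2*(2*α) by ring, mul_inv]; ring
    have hαinv : (1:ℝ) ≤ (2*α)⁻¹ := by
      rw [le_inv_comm₀ one_pos (by positivity)]; linarith
    have ha1R : (a:ℝ) = 1 := by rw [ha1]; norm_num
    rw [ha1R]
    linarith [hPreal, hSb, hsinv, h4α, hαinv, hd0]
  · -- a ≥ 1 general case, δ ≤ 1/8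
    push_neg at hcase
    have h8δ : 8*δ < 1 := by
      by_contra h
      push_neg at h
      have : (8*δ)⁻¹ ≤ 1 := inv_le_one_of_one_le₀ h
      linarith
    have hδ8 : (8:ℝ) ≤ δ⁻¹ := by
      rw [le_inv_comm₀ (by norm_num) hδ]; linarith
    have haP : a ≤ P := by
      have h1 : (a:ℝ) ≤ δ⁻¹/2 := by linarith
      have h2 : ((2*δ)⁻¹:ℝ) = δ⁻¹/2 := by rw [mul_inv]; norm_num; ring
      rw [h2] at hPbig
      exact_mod_cast h1.trans hPbig
    have hcard : ((Finset.Icc a P).card : ℝ) = (P:ℝ) + 1 - a := by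
      rw [Nat.card_Icc, Nat.cast_sub (by omega)]; push_cast; ring
    have htel := tele_cos (2*Real.pi*α) a P haP
    rw [show (2*Real.pi*α)/2 = Real.pi*α by ring, ← hsdef] at htel
    have htel2 : 2 * s * (∑ k ∈ Finset.Icc a P, Real.cos ((k:ℝ)*(2*Real.pi*α)))
        = Real.sin (((P:ℝ)+1/2)*(2*Real.pi*α)) - Real.sin (((a:ℝ)-1/2)*(2*Real.pi*α)) := by
      rw [Finset.mul_sum]; exact htel
    have hSle : 2 * s * (∑ k ∈ Finset.Icc a P, Real.cos ((k:ℝ)*(2*Real.pi*α))) ≤ 2 := by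
      rw [htel2]
      linarith [Real.sin_le_one (((P:ℝ)+1/2)*(2*Real.pi*α)),
        Real.neg_one_le_sin (((a:ℝ)-1/2)*(2*Real.pi*α))]
    set S : ℝ := ∑ k ∈ Finset.Icc a P, Real.cos ((k:ℝ)*(2*Real.pi*α)) with hS
    have hsum : ∑ k ∈ Finset.Icc a P, Real.sin (Real.pi * k * α) ^ 2
        = ((P:ℝ) + 1 - a)/2 - S/2 := by
      have hpt : ∀ k ∈ Finset.Icc a P, Real.sin (Real.pi * (k:ℝ) * α) ^ 2
          = 1/2 - Real.cos ((k:ℝ)*(2*Real.pi*α))/2 := by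
        intro k _
        rw [Real.sin_sq_eq_half_sub,
          show 2*(Real.pi*(k:ℝ)*α) = (k:ℝ)*(2*Real.pi*α) by ring]
      rw [Finset.sum_congr rfl hpt, Finset.sum_sub_distrib, Finset.sum_const, hS,
        ← Finset.sum_div, nsmul_eq_mul, hcard]
      ring
    rw [ge_iff_le, hsum]
    have hSb : S ≤ (2*α)⁻¹ := by
      have h2α : (0:ℝ) < 2*α := by linarith
      have hsS : 2*(2*α)*S ≤ 2 := by
        rcases le_or_gt S 0 with h | h
        · nlinarith
        · nlinarith
      rw [← sub_nonneg, show (2*α)⁻¹ - S = (2 - 2*(2*α)*S) / (2*(2*α)) by field_simp]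
      apply div_nonneg (by linarith) (by linarith)
    linarith [hPreal, hareal, hSb, hδ8]
end

section
/- For 0 < q < 1, the Dirichlet series D(s;q) = Σ_{j≥1} (−1)^{j−1} j^{−s−1} ζ(s + qj), initially defined for Re(s) > 1 − q, extends to a meromorphic function on ℂ whose only poles are simple poles at the points s = 1 − qj for integers j ≥ 1 with residue (−1)^{j−1} j^{−(2−qj)} at s = 1 − qj. -/
/-!
Write `Φ_j(s) = ζ(s + qj) - 1`. Then `D(s) = η(s + 1) + ∑_j (-1)^(j-1) j^(-s-1) Φ_j(s)`, where the
Dirichlet eta function `η` is entire. Since `‖ζ w - 1‖ ≤ C 2^(-re w)` for `re w ≥ 2`, on a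
half-plane `re s > ρ` the summands with `qj ≥ 2 - ρ` are bounded by `C' j^(-ρ-1) 2^(-qj)`, so their
sum is holomorphic there by the Weierstrass M-test. Each of the finitely many remaining summands
is holomorphic except at `1 - qj`, where it inherits the simple pole of `ζ` at `1`, with residue
`(-1)^(j-1) j^(-(1-qj)-1)`.
-/

open Complex Filter Topology HurwitzZeta

lemma norm_natCast_add_one_cpow (j : ℕ) (s : ℂ) :
    ‖((j : ℂ) + 1) ^ s‖ = ((j : ℝ) + 1) ^ s.re := by
  exact_mod_cast norm_natCast_cpow_of_pos j.succ_pos s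

lemma summable_rpow_mul_geometric (a : ℝ) {r : ℝ} (hr0 : 0 ≤ r) (hr1 : r < 1) :
    Summable fun n : ℕ => ((n : ℝ) + 1) ^ a * r ^ (n + 1) := by
  have hk : Summable fun n : ℕ => ((n + 1 : ℕ) : ℝ) ^ ⌈a⌉₊ * r ^ (n + 1) :=
    (summable_nat_add_iff 1).mpr (summable_pow_mul_geometric_of_norm_lt_one (R := ℝ) ⌈a⌉₊
      (by rwa [Real.norm_of_nonneg hr0]))
  refine hk.of_nonneg_of_le (fun n => by positivity) fun n => ?_
  gcongr
  push_cast
  rw [← Real.rpow_natCast]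
  exact Real.rpow_le_rpow_of_exponent_le (by linarith) (Nat.le_ceil a)

lemma tendsto_sub_mul_mul_add_nhdsNE {𝕜 : Type*} [NormedField 𝕜] {f g h : 𝕜 → 𝕜} {p : 𝕜}
    (hf : ContinuousAt f p) (hh : ContinuousAt h p)
    (hg : Tendsto (fun s => (s - p) * g s) (𝓝[≠] p) (𝓝 1)) :
    Tendsto (fun s => (s - p) * (f s * g s + h s)) (𝓝[≠] p) (𝓝 (f p)) := by
  have hsub : Tendsto (fun s => s - p) (𝓝[≠] p) (𝓝 0) := by
    simpa using ((continuous_sub_right p).tendsto p).mono_left nhdsWithin_le_nhds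
  have := ((hf.tendsto.mono_left nhdsWithin_le_nhds).mul hg).add
    (hsub.mul (hh.tendsto.mono_left nhdsWithin_le_nhds))
  rw [mul_one, zero_mul, add_zero] at this
  exact this.congr fun s => by ring

lemma tendsto_sub_mul_riemannZeta_add (c : ℂ) :
    Tendsto (fun s => (s - (1 - c)) * riemannZeta (s + c)) (𝓝[≠] (1 - c)) (𝓝 1) := by
  have hshift : Tendsto (· + c) (𝓝[≠] (1 - c)) (𝓝[≠] 1) := by
    rw [Tendsto, map_add_right_nhdsNE, sub_add_cancel]
  exact (riemannZeta_residue_one.comp hshift).congr fun s => by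
    simp only [Function.comp_apply]
    ring

lemma hasSum_riemannZeta_sub_one {w : ℂ} (hw : 1 < w.re) :
    HasSum (fun n : ℕ => ((n : ℂ) + 2) ^ (-w)) (riemannZeta w - 1) := by
  have h := (hasSum_nat_add_iff' 2).mpr ((Complex.summable_one_div_nat_cpow.mpr hw).hasSum_iff.mpr
    (zeta_eq_tsum_one_div_nat_cpow hw).symm)
  simp only [Nat.cast_add, Nat.cast_ofNat, one_div, Finset.sum_range_succ, Finset.range_one,
    Finset.sum_singleton, CharP.cast_eq_zero, zero_cpow (ne_zero_of_one_lt_re hw), inv_zero,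
    Nat.cast_one, one_cpow, inv_one, zero_add] at h
  exact h.congr_fun fun n => by rw [cpow_neg]

lemma exists_norm_riemannZeta_sub_one_le :
    ∃ C : ℝ, 0 ≤ C ∧ ∀ w : ℂ, 2 ≤ w.re → ‖riemannZeta w - 1‖ ≤ C * 2 ^ (-w.re) := by
  obtain ⟨S, hS⟩ : Summable fun n : ℕ => ((n : ℝ) + 2) ^ (-2 : ℝ) :=
    ((summable_nat_add_iff 2).mpr (Real.summable_nat_rpow.mpr (by norm_num : (-2 : ℝ) < -1)))
      |>.congr fun n => by push_cast; rfl
  refine ⟨4 * S, by linarith [hS.nonneg fun n => by positivity], fun w hw => ?_⟩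
  rw [← (hasSum_riemannZeta_sub_one (by linarith)).tsum_eq]
  refine (tsum_of_norm_bounded (hS.mul_left (2 ^ (2 - w.re))) fun n => ?_).trans_eq ?_
  · have hn : (2 : ℝ) ≤ n + 2 := by linarith [n.cast_nonneg (α := ℝ)]
    calc ‖((n : ℂ) + 2) ^ (-w)‖ = ((n : ℝ) + 2) ^ (-2 : ℝ) * ((n : ℝ) + 2) ^ (2 - w.re) := by
          have h := norm_natCast_add_one_cpow (n + 1) (-w)
          push_cast at h
          rw [← Real.rpow_add (by linarith), show (n : ℂ) + 2 = n + 1 + 1 by ring, h, neg_re]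
          ring_nf
      _ ≤ 2 ^ (2 - w.re) * ((n : ℝ) + 2) ^ (-2 : ℝ) := by
          rw [mul_comm]
          gcongr ?_ * _
          exact Real.rpow_le_rpow_of_nonpos two_pos hn (by linarith)
  · rw [Real.rpow_sub two_pos, Real.rpow_neg two_pos.le]
    norm_num
    ring

/-- The Dirichlet eta function `η(s) = ∑_{n ≥ 1} (-1)^(n-1) n^(-s)`, obtained as `-cosZeta (1/2)`
since `cos (π n) = (-1)^n`; this makes it entire. -/
noncomputable def dirichletEta (s : ℂ) : ℂ := -cosZeta ((2⁻¹ : ℝ) : UnitAddCircle) s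

lemma differentiable_dirichletEta : Differentiable ℂ dirichletEta := by
  refine (differentiable_cosZeta_of_ne_zero ?_).neg
  rw [Ne, AddCircle.coe_eq_zero_iff]
  rintro ⟨n, hn⟩
  rw [zsmul_one] at hn
  have h : 2 * n = 1 := by exact_mod_cast (show (2 : ℝ) * n = 1 by rw [hn]; norm_num)
  omega

lemma hasSum_dirichletEta {s : ℂ} (hs : 1 < s.re) :
    HasSum (fun j : ℕ => (-1) ^ j * ((j : ℂ) + 1) ^ (-s)) (dirichletEta s) := by
  have h := (hasSum_nat_add_iff' 1).mpr (hasSum_nat_cosZeta 2⁻¹ hs)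
  simp only [Finset.sum_range_one, Nat.cast_zero, zero_cpow (ne_zero_of_one_lt_re hs), div_zero,
    sub_zero] at h
  refine h.neg.congr_fun fun j => ?_
  rw [show 2 * Real.pi * 2⁻¹ * ((j + 1 : ℕ) : ℝ) = ((j + 1 : ℕ) : ℝ) * Real.pi by ring,
    Real.cos_nat_mul_pi, cpow_neg]
  push_cast
  ring

namespace AltZetaShift

def pole (q : ℝ) (j : ℕ) : ℂ := 1 - q * ((j : ℂ) + 1)

lemma re_pole (q : ℝ) (j : ℕ) : (pole q j).re = 1 - q * ((j : ℝ) + 1) := by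
  simp [pole]

lemma pole_injective {q : ℝ} (hq : q ≠ 0) : Function.Injective (pole q) := by
  intro i j h
  have h' := congrArg re h
  simp only [re_pole, sub_right_inj, mul_eq_mul_left_iff, hq, or_false, add_left_inj] at h'
  exact_mod_cast h'

-- Summand `j` is the paper's summand `j + 1`, with `ζ(s + q(j+1))` replaced by `Φ_{j+1}(s)`.
noncomputable def term (q : ℝ) (j : ℕ) (s : ℂ) : ℂ :=
  (-1) ^ j * ((j : ℂ) + 1) ^ (-s - 1) * (riemannZeta (s + q * ((j : ℂ) + 1)) - 1)

lemma differentiable_natCast_add_one_cpow_neg_sub_one (j : ℕ) :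
    Differentiable ℂ fun s : ℂ => ((j : ℂ) + 1) ^ (-s - 1) :=
  fun _ => (differentiableAt_id.neg.sub_const 1).const_cpow
    (Or.inl (by exact_mod_cast j.succ_ne_zero))

lemma differentiableAt_term {q : ℝ} {j : ℕ} {s : ℂ} (hs : s ≠ pole q j) :
    DifferentiableAt ℂ (term q j) s := by
  have hζ : s + q * ((j : ℂ) + 1) ≠ 1 := fun h => hs (eq_sub_of_add_eq h)
  exact ((differentiableAt_const _).mul (differentiable_natCast_add_one_cpow_neg_sub_one j s)).mul
    (((differentiableAt_riemannZeta hζ).comp s (differentiableAt_id.add_const _)).sub_const 1)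

lemma analyticAt_term {q : ℝ} {j : ℕ} {s : ℂ} (hs : s ≠ pole q j) :
    AnalyticAt ℂ (term q j) s :=
  DifferentiableOn.analyticAt (fun _ hz => (differentiableAt_term hz).differentiableWithinAt)
    (isOpen_ne.mem_nhds hs)

lemma norm_term_le {q ρ C : ℝ} (hC0 : 0 ≤ C)
    (hC : ∀ w : ℂ, 2 ≤ w.re → ‖riemannZeta w - 1‖ ≤ C * 2 ^ (-w.re))
    {j : ℕ} (hj : 2 - ρ ≤ q * (j + 1)) {s : ℂ} (hs : ρ ≤ s.re) :
    ‖term q j s‖ ≤ C * 2 ^ (-ρ) * (((j : ℝ) + 1) ^ (-ρ - 1) * (2 ^ (-q)) ^ (j + 1)) := by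
  have hre : (s + q * ((j : ℂ) + 1)).re = s.re + q * (j + 1) := by simp
  have hpow : (2 : ℝ) ^ (-(s.re + q * (j + 1))) ≤ 2 ^ (-ρ) * (2 ^ (-q)) ^ (j + 1) := by
    rw [← Real.rpow_mul_natCast two_pos.le, ← Real.rpow_add two_pos]
    push_cast
    exact Real.rpow_le_rpow_of_exponent_le one_le_two (by linarith)
  rw [term, norm_mul, norm_mul, norm_pow, norm_neg, norm_one, one_pow, one_mul,
    norm_natCast_add_one_cpow]
  calc ((j : ℝ) + 1) ^ (-s - 1).re * ‖riemannZeta (s + q * ((j : ℂ) + 1)) - 1‖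
      ≤ ((j : ℝ) + 1) ^ (-ρ - 1) * (C * (2 ^ (-ρ) * (2 ^ (-q)) ^ (j + 1))) := by
        gcongr
        · exact le_add_of_nonneg_left j.cast_nonneg
        · simp only [sub_re, neg_re, one_re]
          linarith
        · refine (hC _ (by rw [hre]; linarith)).trans ?_
          rw [hre]
          gcongr
    _ = C * 2 ^ (-ρ) * (((j : ℝ) + 1) ^ (-ρ - 1) * (2 ^ (-q)) ^ (j + 1)) := by ring

lemma eventually_le_mul_add_one {q : ℝ} (hq : 0 < q) (x : ℝ) :
    ∀ᶠ M : ℕ in atTop, x ≤ q * ((M : ℝ) + 1) :=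
  ((tendsto_natCast_atTop_atTop.atTop_add tendsto_const_nhds).const_mul_atTop hq)
    |>.eventually_ge_atTop x

lemma le_mul_natCast_add_add_one {q x : ℝ} (hq : 0 ≤ q) {M : ℕ} (hM : x ≤ q * (M + 1))
    (j : ℕ) : x ≤ q * (((j + M : ℕ) : ℝ) + 1) := by
  push_cast
  nlinarith [j.cast_nonneg (α := ℝ)]

lemma exists_summable_norm_term_add_le {q ρ : ℝ} (hq : 0 < q) {M : ℕ}
    (hM : 2 - ρ ≤ q * (M + 1)) :
    ∃ u : ℕ → ℝ, Summable u ∧ ∀ j s, ρ ≤ s.re → ‖term q (j + M) s‖ ≤ u j := by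
  obtain ⟨C, hC0, hC⟩ := exists_norm_riemannZeta_sub_one_le
  have hr : (2 : ℝ) ^ (-q) < 1 :=
    Real.rpow_lt_one_of_one_lt_of_neg one_lt_two (neg_neg_of_pos hq)
  exact ⟨_, (summable_nat_add_iff M).mpr
    ((summable_rpow_mul_geometric (-ρ - 1) (by positivity) hr).mul_left (C * 2 ^ (-ρ))),
    fun j s hs => norm_term_le hC0 hC (le_mul_natCast_add_add_one hq.le hM j) hs⟩

lemma summable_term {q : ℝ} (hq : 0 < q) (s : ℂ) : Summable fun j => term q j s := by
  obtain ⟨M, hM⟩ := (eventually_le_mul_add_one hq (2 - s.re)).exists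
  obtain ⟨u, hu, hle⟩ := exists_summable_norm_term_add_le hq hM
  exact (summable_nat_add_iff M).mp (hu.of_norm_bounded fun j => hle j s le_rfl)

noncomputable def tail (q : ℝ) (M : ℕ) (s : ℂ) : ℂ := ∑' j, term q (j + M) s

lemma differentiableOn_tail {q ρ : ℝ} (hq : 0 < q) {M : ℕ} (hM : 2 - ρ ≤ q * (M + 1)) :
    DifferentiableOn ℂ (tail q M) {s | ρ < s.re} := by
  obtain ⟨u, hu, hle⟩ := exists_summable_norm_term_add_le hq hM
  refine differentiableOn_tsum_of_summable_norm hu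
    (fun j s hs => (differentiableAt_term fun h => ?_).differentiableWithinAt)
    (isOpen_lt continuous_const continuous_re) fun j s hs => hle j s hs.le
  have hs : ρ < s.re := hs
  have := le_mul_natCast_add_add_one hq.le hM j
  rw [h, re_pole] at hs
  linarith

lemma eventually_analyticAt_tail {q : ℝ} (hq : 0 < q) (s : ℂ) :
    ∀ᶠ M in atTop, AnalyticAt ℂ (tail q M) s := by
  filter_upwards [eventually_le_mul_add_one hq (2 - (s.re - 1))] with M hM
  exact (differentiableOn_tail hq hM).analyticAt
    ((isOpen_lt continuous_const continuous_re).mem_nhds (by simp))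

noncomputable def D (q : ℝ) (s : ℂ) : ℂ := dirichletEta (s + 1) + ∑' j, term q j s

lemma D_eq_add_sum_add_tail {q : ℝ} (hq : 0 < q) (M : ℕ) :
    D q = fun s => dirichletEta (s + 1) + ∑ j ∈ Finset.range M, term q j s + tail q M s := by
  ext s
  rw [D, add_assoc, tail, (summable_term hq s).sum_add_tsum_nat_add]

lemma hasSum_D {q : ℝ} (hq : 0 < q) {s : ℂ} (hs : 0 < s.re) :
    HasSum (fun j : ℕ =>
      (-1) ^ j * ((j : ℂ) + 1) ^ (-s - 1) * riemannZeta (s + q * ((j : ℂ) + 1))) (D q s) := by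
  refine ((hasSum_dirichletEta (s := s + 1) (by simpa using hs)).add
    (summable_term hq s).hasSum).congr_fun fun j => ?_
  rw [term, neg_add']
  ring

lemma analyticAt_D {q : ℝ} (hq : 0 < q) {s : ℂ} (hs : ∀ j, s ≠ pole q j) :
    AnalyticAt ℂ (D q) s := by
  obtain ⟨M, hM⟩ := (eventually_analyticAt_tail hq s).exists
  rw [D_eq_add_sum_add_tail hq M]
  exact (((differentiable_dirichletEta.comp (differentiable_id.add_const 1)).analyticAt s).add
    (Finset.analyticAt_fun_sum _ fun j _ => analyticAt_term (hs j))).add hM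

lemma tendsto_sub_pole_mul_D {q : ℝ} (hq : 0 < q) (j : ℕ) :
    Tendsto (fun s => (s - pole q j) * D q s) (𝓝[≠] (pole q j))
      (𝓝 ((-1) ^ j * ((j : ℂ) + 1) ^ (-pole q j - 1))) := by
  obtain ⟨M, hM, hjM⟩ :=
    ((eventually_analyticAt_tail hq (pole q j)).and (eventually_gt_atTop j)).exists
  have hf := differentiable_natCast_add_one_cpow_neg_sub_one j
  set f : ℂ → ℂ := fun s => (-1) ^ j * ((j : ℂ) + 1) ^ (-s - 1)
  have hD : D q = fun s => f s * riemannZeta (s + q * ((j : ℂ) + 1)) +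
      (dirichletEta (s + 1) + ∑ i ∈ (Finset.range M).erase j, term q i s + tail q M s - f s) := by
    rw [D_eq_add_sum_add_tail hq M]
    ext s
    rw [← Finset.add_sum_erase _ _ (Finset.mem_range.mpr hjM), term]
    ring
  rw [hD]
  refine tendsto_sub_mul_mul_add_nhdsNE (continuous_const.mul hf.continuous).continuousAt ?_
    (tendsto_sub_mul_riemannZeta_add _)
  refine (((((differentiable_dirichletEta.comp (differentiable_id.add_const 1)).analyticAt _).add
    (Finset.analyticAt_fun_sum _ fun i hi => analyticAt_term ?_)).add hM).sub
    (analyticAt_const.mul (hf.analyticAt _))).continuousAt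
  exact ((pole_injective hq.ne').ne (Finset.ne_of_mem_erase hi)).symm

end AltZetaShift

theorem stmt_17 (q : ℝ) (hq0 : 0 < q) (hq1 : q < 1) :
    ∃ D : ℂ → ℂ,
      (∀ s : ℂ, 1 - q < s.re →
        D s = ∑' j : ℕ,
          (-1) ^ j * ((j : ℂ) + 1) ^ (-s - 1) * riemannZeta (s + q * ((j : ℂ) + 1))) ∧
      AnalyticOn ℂ D {s : ℂ | ∀ j : ℕ, s ≠ 1 - q * ((j : ℂ) + 1)} ∧
      (∀ j : ℕ,
        Filter.Tendsto (fun s : ℂ => (s - (1 - q * ((j : ℂ) + 1))) * D s)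
          (nhdsWithin (1 - q * ((j : ℂ) + 1)) {s : ℂ | s ≠ 1 - q * ((j : ℂ) + 1)})
          (nhds ((-1) ^ j * (((j : ℝ) + 1) ^ (q * ((j : ℝ) + 1) - 2) : ℝ)))) := by
  refine ⟨AltZetaShift.D q, fun s hs => (AltZetaShift.hasSum_D hq0 (by linarith)).tsum_eq.symm,
    fun s hs => (AltZetaShift.analyticAt_D hq0 hs).analyticWithinAt, fun j => ?_⟩
  have h := AltZetaShift.tendsto_sub_pole_mul_D hq0 j
  rwa [show ((j : ℂ) + 1) ^ (-AltZetaShift.pole q j - 1) =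
      (((j : ℝ) + 1) ^ (q * ((j : ℝ) + 1) - 2) : ℝ) by
    rw [ofReal_cpow (by positivity), AltZetaShift.pole]
    push_cast
    ring_nf] at h
end
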